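/- Let 0 < y < 1 and let a_i, a_j > 0 with a_i ≠ a_j and a_i, a_j ∉ [1−√y, 1+√y]; set λ_i = φ(a_i), λ_j = φ(a_j), where φ(a) = a + ya/(a−1), and let m₁(λ) = ∫ x/(λ−x) dF_y(x). Then: (1) w(i,j) := 1 + y m₁(λ_i) + y m₁(λ_j) + y²(1+m₁(λ_i))(1+m₁(λ_j)) / [(λ_i − y(1+m₁(λ_i)))(λ_j − y(1+m₁(λ_j)))] equals (y+a_i−1)(y+a_j−1) / [(a_i−1)(a_j−1)]; and (2) with θ(i,j) := 1 + y m₁(λ_i) + y m₁(λ_j) + y( (λ_j/(λ_i−λ_j)) m₁(λ_j) + (λ_i/(λ_j−λ_i)) m₁(λ_i) ), one has θ(i,j) − w(i,j) = y(y+a_i−1)(y+a_j−1) / [ (a_i−1)(a_j−1)((a_i−1)(a_j−1) − y) ]. -/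

import Mathlib

/-!
For `λ` outside the support, the Marčenko–Pastur density turns `m₁(λ)` into a Cauchy-type
integral of the semicircle `√(r² - (x - c)²)` with centre `c = 1 + y` and radius `r = 2√y`.
An explicit arcsine primitive evaluates it to `π (λ - c - E)`, where `E` is the square root of
`(λ - c)² - r²` with the sign of `λ - c`. At `λ = φ(a)` one has
`λ - c = ((a-1)² + y)/(a-1)` and `E = ((a-1)² - y)/(a-1)`, whence `m₁(φ(a)) = 1/(a-1)`;
both closed forms are then rational identities in `a_i`, `a_j`.
-/

open MeasureTheory Real

/-- Density of the Marčenko–Pastur distribution with ratio parameter `c` (the absolutely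
continuous part; it vanishes outside `[(1-√c)², (1+√c)²]`). -/
noncomputable def mpDensity (c x : ℝ) : ℝ :=
  if (1 - Real.sqrt c) ^ 2 ≤ x ∧ x ≤ (1 + Real.sqrt c) ^ 2 then
    Real.sqrt ((x - (1 - Real.sqrt c) ^ 2) * ((1 + Real.sqrt c) ^ 2 - x)) /
      (2 * Real.pi * c * x)
  else 0

/-- The Marčenko–Pastur law with ratio parameter `c > 0`: an atom of mass `max (1 - 1/c) 0`
at `0` plus the absolutely continuous part with density `mpDensity c`.  For `c < 1` (in
particular for `c = y ∈ (0,1)`) the atom vanishes and this is the measure `F_y` with density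
`(1/(2πxy))√((x-a_y)(b_y-x))` on `[a_y, b_y]`, `a_y = (1-√y)²`, `b_y = (1+√y)²`. -/
noncomputable def mpLaw (c : ℝ) : Measure ℝ :=
  ENNReal.ofReal (1 - 1 / c) • Measure.dirac 0 +
    (volume : Measure ℝ).withDensity fun x => ENNReal.ofReal (mpDensity c x)

/-- The map `φ(a) = a + ya/(a-1)` sending a spike outside `[1-√y, 1+√y]` to the a.s. limit
of the corresponding extreme sample eigenvalue, outside the Marčenko–Pastur support. -/
noncomputable def phiSpike (y a : ℝ) : ℝ := a + y * a / (a - 1)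

/-- `m₁(λ) = ∫ x/(λ−x) dF_y(x)`, the first Stieltjes-type moment of the
Marčenko–Pastur law `F_y`. -/
noncomputable def m1MP (y lam : ℝ) : ℝ := ∫ x, x / (lam - x) ∂mpLaw y

/-- The constant `w(i,j)` in terms of `m₁` at `λ_i`, `λ_j`. -/
noncomputable def wAt (y lami lamj : ℝ) : ℝ :=
  1 + y * m1MP y lami + y * m1MP y lamj +
    y ^ 2 * (1 + m1MP y lami) * (1 + m1MP y lamj) /
      ((lami - y * (1 + m1MP y lami)) * (lamj - y * (1 + m1MP y lamj)))

/-- The constant `θ(i,j)` in terms of `m₁` at `λ_i`, `λ_j`. -/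
noncomputable def thetaAt (y lami lamj : ℝ) : ℝ :=
  1 + y * m1MP y lami + y * m1MP y lamj +
    y * (lamj / (lami - lamj) * m1MP y lamj + lami / (lamj - lami) * m1MP y lami)

open Set

/-- For `|μ| > 1` the Möbius map `t ↦ (μ t - 1)/(μ - t)` sends `[-1, 1]` onto itself,
fixing `±1`. -/
noncomputable def semicirclePrimitive (μ E t : ℝ) : ℝ :=
  μ * arcsin t - √(1 - t ^ 2) - E * arcsin ((μ * t - 1) / (μ - t))

section Semicircle

variable {μ E : ℝ}

theorem mul_sub_pos_of_sq_eq (hE : E ^ 2 = μ ^ 2 - 1) (hEμ : 0 < E * μ) {t : ℝ}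
    (ht : t ∈ Icc (-1) 1) : 0 < E * (μ - t) := by
  obtain ⟨ht₁, ht₂⟩ := ht
  rcases lt_or_gt_of_ne (left_ne_zero_of_mul hEμ.ne') with hE₀ | hE₀
  · have hμ₀ : μ < 0 := by nlinarith
    have hμ : μ < -1 := by nlinarith
    nlinarith
  · have hμ₀ : 0 < μ := by nlinarith
    have hμ : 1 < μ := by nlinarith
    nlinarith

theorem sub_ne_zero_of_sq_eq (hE : E ^ 2 = μ ^ 2 - 1) (hEμ : 0 < E * μ) {t : ℝ}
    (ht : t ∈ Icc (-1) 1) : μ - t ≠ 0 :=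
  right_ne_zero_of_mul (mul_sub_pos_of_sq_eq hE hEμ ht).ne'

theorem one_sub_sq_moebius {t : ℝ} (ht : μ - t ≠ 0) :
    1 - ((μ * t - 1) / (μ - t)) ^ 2 = (μ ^ 2 - 1) * (1 - t ^ 2) / (μ - t) ^ 2 := by
  field_simp
  ring

theorem hasDerivAt_arcsin_moebius (hE : E ^ 2 = μ ^ 2 - 1) {t : ℝ} (ht : t ∈ Ioo (-1) 1)
    (hpos : 0 < E * (μ - t)) :
    HasDerivAt (fun t => arcsin ((μ * t - 1) / (μ - t))) (E / (√(1 - t ^ 2) * (μ - t))) t := by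
  have hμt : μ - t ≠ 0 := right_ne_zero_of_mul hpos.ne'
  have ht₁ : 0 < 1 - t ^ 2 := by nlinarith [ht.1, ht.2]
  have hs : 0 < √(1 - t ^ 2) := sqrt_pos.2 ht₁
  have hsqrt : √(1 - ((μ * t - 1) / (μ - t)) ^ 2) = E * √(1 - t ^ 2) / (μ - t) := by
    rw [one_sub_sq_moebius hμt, ← hE, sqrt_eq_iff_mul_self_eq_of_pos]
    · field_simp
      rw [sq_sqrt ht₁.le]
    · have : 0 < E / (μ - t) := by
        rw [show E / (μ - t) = E * (μ - t) / (μ - t) ^ 2 by field_simp]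
        positivity
      rw [mul_div_right_comm]
      positivity
  have hu : HasDerivAt (fun t => (μ * t - 1) / (μ - t)) (E ^ 2 / (μ - t) ^ 2) t := by
    refine ((((hasDerivAt_id t).const_mul μ).sub_const 1).div
      ((hasDerivAt_id t).const_sub μ) hμt).congr_deriv ?_
    rw [hE, id]
    ring
  have hu₁ : 1 - ((μ * t - 1) / (μ - t)) ^ 2 ≠ 0 := by
    rw [one_sub_sq_moebius hμt, ← hE]
    have := left_ne_zero_of_mul hpos.ne'
    positivity
  have := (hasDerivAt_arcsin (x := (μ * t - 1) / (μ - t)) ?_ ?_).comp t hu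
  · refine this.congr_deriv ?_
    rw [hsqrt]
    field_simp
  all_goals
    intro h
    apply hu₁
    rw [h]
    norm_num

theorem hasDerivAt_semicirclePrimitive (hE : E ^ 2 = μ ^ 2 - 1) (hEμ : 0 < E * μ) {t : ℝ}
    (ht : t ∈ Ioo (-1) 1) :
    HasDerivAt (semicirclePrimitive μ E) (√(1 - t ^ 2) / (μ - t)) t := by
  have hpos := mul_sub_pos_of_sq_eq hE hEμ (Ioo_subset_Icc_self ht)
  have hμt := sub_ne_zero_of_sq_eq hE hEμ (Ioo_subset_Icc_self ht)
  have ht₁ : 0 < 1 - t ^ 2 := by nlinarith [ht.1, ht.2]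
  have hs : √(1 - t ^ 2) ≠ 0 := (sqrt_pos.2 ht₁).ne'
  have hsqrt : HasDerivAt (fun t => √(1 - t ^ 2)) (-t / √(1 - t ^ 2)) t := by
    refine ((hasDerivAt_pow 2 t).const_sub 1).sqrt ht₁.ne' |>.congr_deriv ?_
    field_simp
    ring
  have harcsin := hasDerivAt_arcsin (by linarith [ht.1]) (by linarith [ht.2])
  refine (((harcsin.const_mul μ).sub hsqrt).sub
    ((hasDerivAt_arcsin_moebius hE ht hpos).const_mul E)).congr_deriv ?_
  field_simp
  rw [sq_sqrt ht₁.le]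
  linear_combination -hE

theorem continuousOn_semicirclePrimitive (hE : E ^ 2 = μ ^ 2 - 1) (hEμ : 0 < E * μ) :
    ContinuousOn (semicirclePrimitive μ E) (Icc (-1) 1) := by
  have hμt : ∀ t ∈ Icc (-1 : ℝ) 1, μ - t ≠ 0 := fun _ => sub_ne_zero_of_sq_eq hE hEμ
  unfold semicirclePrimitive
  fun_prop (disch := assumption)

theorem semicirclePrimitive_one_sub_neg_one (hE : E ^ 2 = μ ^ 2 - 1) (hEμ : 0 < E * μ) :
    semicirclePrimitive μ E 1 - semicirclePrimitive μ E (-1) = π * (μ - E) := by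
  have hu₁ : (μ * 1 - 1) / (μ - 1) = 1 := by
    rw [mul_one, div_self (sub_ne_zero_of_sq_eq hE hEμ (by norm_num))]
  have hu₂ : (μ * -1 - 1) / (μ - -1) = -1 := by
    rw [div_eq_iff (sub_ne_zero_of_sq_eq hE hEμ (by norm_num))]
    ring
  simp only [semicirclePrimitive, hu₁, hu₂, arcsin_one, arcsin_neg_one]
  norm_num
  ring

theorem integral_sqrt_one_sub_sq_div_sub (hE : E ^ 2 = μ ^ 2 - 1) (hEμ : 0 < E * μ) :
    ∫ t in (-1)..1, √(1 - t ^ 2) / (μ - t) = π * (μ - E) := by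
  rw [intervalIntegral.integral_eq_sub_of_hasDerivAt_of_le (by norm_num)
    (continuousOn_semicirclePrimitive hE hEμ)
    (fun t ht => hasDerivAt_semicirclePrimitive hE hEμ ht)]
  · exact semicirclePrimitive_one_sub_neg_one hE hEμ
  · refine ContinuousOn.intervalIntegrable ?_
    rw [uIcc_of_le (by norm_num)]
    have hμt : ∀ t ∈ Icc (-1 : ℝ) 1, μ - t ≠ 0 := fun _ => sub_ne_zero_of_sq_eq hE hEμ
    fun_prop (disch := assumption)

theorem integral_sqrt_sq_sub_sq_div_sub {c r lam : ℝ} (hr : 0 < r)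
    (hE : E ^ 2 = (lam - c) ^ 2 - r ^ 2) (hElam : 0 < E * (lam - c)) :
    ∫ x in (c - r)..(c + r), √(r ^ 2 - (x - c) ^ 2) / (lam - x) = π * (lam - c - E) := by
  have hE' : (E / r) ^ 2 = ((lam - c) / r) ^ 2 - 1 := by
    field_simp
    linear_combination hE
  have hEμ' : 0 < E / r * ((lam - c) / r) := by
    rw [div_mul_div_comm]
    positivity
  have hscale : ∀ t, √(r ^ 2 - (r * t + c - c) ^ 2) / (lam - (r * t + c))
      = √(1 - t ^ 2) / ((lam - c) / r - t) := by
    intro t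
    rw [show r ^ 2 - (r * t + c - c) ^ 2 = r ^ 2 * (1 - t ^ 2) by ring,
      sqrt_mul (sq_nonneg r), sqrt_sq hr.le,
      show lam - (r * t + c) = r * ((lam - c) / r - t) by field_simp; ring,
      mul_div_mul_left _ _ hr.ne']
  have := intervalIntegral.smul_integral_comp_mul_add
    (fun x => √(r ^ 2 - (x - c) ^ 2) / (lam - x)) r c (a := -1) (b := 1)
  rw [mul_neg_one, mul_one, neg_add_eq_sub, add_comm] at this
  rw [← this]
  simp only [hscale, integral_sqrt_one_sub_sq_div_sub hE' hEμ', smul_eq_mul]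
  field_simp

end Semicircle

theorem one_sub_sqrt_sq {c : ℝ} (hc : 0 ≤ c) : (1 - √c) ^ 2 = 1 + c - 2 * √c := by
  rw [sub_sq, sq_sqrt hc]; ring

theorem one_add_sqrt_sq {c : ℝ} (hc : 0 ≤ c) : (1 + √c) ^ 2 = 1 + c + 2 * √c := by
  rw [add_sq, sq_sqrt hc]; ring

theorem mpDensity_eq_indicator {c : ℝ} (hc : 0 ≤ c) (x : ℝ) :
    mpDensity c x = (Icc (1 + c - 2 * √c) (1 + c + 2 * √c)).indicator
      (fun x => √((2 * √c) ^ 2 - (x - (1 + c)) ^ 2) / (2 * π * c * x)) x := by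
  simp only [mpDensity, one_sub_sqrt_sq hc, one_add_sqrt_sq hc, indicator_apply, mem_Icc]
  congr 3
  ring

theorem mpDensity_nonneg {c : ℝ} (hc : 0 ≤ c) (x : ℝ) : 0 ≤ mpDensity c x := by
  unfold mpDensity
  split_ifs with hx
  · have : 0 ≤ x := (sq_nonneg _).trans hx.1
    positivity
  · exact le_rfl

theorem measurable_mpDensity (c : ℝ) : Measurable (mpDensity c) :=
  Measurable.ite (measurableSet_Icc (a := (1 - √c) ^ 2) (b := (1 + √c) ^ 2))
    (by fun_prop) measurable_const

theorem mpLaw_of_le_one {c : ℝ} (hc₀ : 0 < c) (hc₁ : c ≤ 1) :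
    mpLaw c = volume.withDensity fun x => ENNReal.ofReal (mpDensity c x) := by
  have hatom : 1 - 1 / c ≤ 0 := by
    rw [sub_nonpos, le_div_iff₀ hc₀, one_mul]
    exact hc₁
  rw [mpLaw, ENNReal.ofReal_of_nonpos hatom, zero_smul, zero_add]

theorem integral_mpLaw_of_le_one {c : ℝ} (hc₀ : 0 < c) (hc₁ : c ≤ 1) (f : ℝ → ℝ) :
    ∫ x, f x ∂mpLaw c = ∫ x, mpDensity c x * f x := by
  rw [mpLaw_of_le_one hc₀ hc₁, integral_withDensity_eq_integral_toReal_smul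
    (measurable_mpDensity c).ennreal_ofReal (ae_of_all _ fun _ => ENNReal.ofReal_lt_top)]
  simp only [ENNReal.toReal_ofReal (mpDensity_nonneg hc₀.le _), smul_eq_mul]

theorem m1MP_eq {y lam E : ℝ} (hy₀ : 0 < y) (hy₁ : y ≤ 1)
    (hE : E ^ 2 = (lam - (1 + y)) ^ 2 - (2 * √y) ^ 2) (hElam : 0 < E * (lam - (1 + y))) :
    m1MP y lam = (lam - (1 + y) - E) / (2 * y) := by
  set c := 1 + y
  set r := 2 * √y
  have hr : 0 < r := by positivity
  have hcr : 0 ≤ c - r := by rw [← one_sub_sqrt_sq hy₀.le]; positivity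
  have hscale : ∀ x ∈ Ioc (c - r) (c + r),
      √(r ^ 2 - (x - c) ^ 2) / (2 * π * y * x) * (x / (lam - x)) =
        (2 * π * y)⁻¹ * (√(r ^ 2 - (x - c) ^ 2) / (lam - x)) := by
    intro x hx
    have : x ≠ 0 := (hcr.trans_lt hx.1).ne'
    field_simp
  calc m1MP y lam = ∫ x, mpDensity y x * (x / (lam - x)) := integral_mpLaw_of_le_one hy₀ hy₁ _
    _ = ∫ x in Icc (c - r) (c + r),
          √(r ^ 2 - (x - c) ^ 2) / (2 * π * y * x) * (x / (lam - x)) := by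
      rw [← integral_indicator measurableSet_Icc]
      congr 1 with x
      rw [mpDensity_eq_indicator hy₀.le, indicator_mul_left]
    _ = ∫ x in (c - r)..(c + r),
          √(r ^ 2 - (x - c) ^ 2) / (2 * π * y * x) * (x / (lam - x)) := by
      rw [integral_Icc_eq_integral_Ioc, intervalIntegral.integral_of_le (by linarith)]
    _ = ∫ x in (c - r)..(c + r), (2 * π * y)⁻¹ * (√(r ^ 2 - (x - c) ^ 2) / (lam - x)) :=
      intervalIntegral.integral_congr_ae <| ae_of_all _ fun x hx =>
        hscale x (by rwa [uIoc_of_le (by linarith)] at hx)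
    _ = (lam - c - E) / (2 * y) := by
      rw [intervalIntegral.integral_const_mul, integral_sqrt_sq_sub_sq_div_sub hr hE hElam]
      field_simp

theorem sqrt_lt_abs_sub_one_of_notMem_Icc {y a : ℝ} (ha : a ∉ Icc (1 - √y) (1 + √y)) :
    √y < |a - 1| := by
  rw [mem_Icc, not_and_or, not_le, not_le] at ha
  rcases ha with ha | ha
  · exact lt_abs.2 (Or.inr (by linarith))
  · exact lt_abs.2 (Or.inl (by linarith))

theorem lt_sq_sub_one_of_notMem_Icc {y a : ℝ} (ha : a ∉ Icc (1 - √y) (1 + √y)) :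
    y < (a - 1) ^ 2 :=
  sq_abs (a - 1) ▸ lt_sq_of_sqrt_lt (sqrt_lt_abs_sub_one_of_notMem_Icc ha)

theorem sub_one_ne_zero_of_notMem_Icc {y a : ℝ} (ha : a ∉ Icc (1 - √y) (1 + √y)) :
    a - 1 ≠ 0 :=
  abs_pos.1 ((sqrt_nonneg y).trans_lt (sqrt_lt_abs_sub_one_of_notMem_Icc ha))

theorem m1MP_phiSpike {y a : ℝ} (hy₀ : 0 < y) (hy₁ : y ≤ 1)
    (ha : a ∉ Icc (1 - √y) (1 + √y)) : m1MP y (phiSpike y a) = 1 / (a - 1) := by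
  have ha₁ := sub_one_ne_zero_of_notMem_Icc ha
  have hlam : phiSpike y a - (1 + y) = ((a - 1) ^ 2 + y) / (a - 1) := by
    unfold phiSpike
    field_simp
    ring
  rw [m1MP_eq (E := ((a - 1) ^ 2 - y) / (a - 1)) hy₀ hy₁, hlam]
  · field_simp
    ring
  · rw [hlam, mul_pow, sq_sqrt hy₀.le]
    field_simp
    ring
  · rw [hlam, div_mul_div_comm, ← sq]
    have hya := sub_pos.2 (lt_sq_sub_one_of_notMem_Icc ha)
    positivity

theorem phiSpike_sub_mul_one_add {y a : ℝ} (ha : a - 1 ≠ 0) :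
    phiSpike y a - y * (1 + 1 / (a - 1)) = a := by
  unfold phiSpike
  field_simp
  ring

theorem phiSpike_sub_phiSpike {y a b : ℝ} (ha : a - 1 ≠ 0) (hb : b - 1 ≠ 0) :
    phiSpike y a - phiSpike y b = (a - b) * ((a - 1) * (b - 1) - y) / ((a - 1) * (b - 1)) := by
  unfold phiSpike
  field_simp
  ring

/-- Closed forms of the covariance constants `w(i,j)` and `θ(i,j) − w(i,j)` evaluated at
`λ_i = φ(a_i)`, `λ_j = φ(a_j)` for two distinct spikes `a_i ≠ a_j` outside the bulk. -/
theorem covariance_constants_closed_form (y ai aj : ℝ) (hy0 : 0 < y) (hy1 : y < 1)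
    (hai : 0 < ai) (haj : 0 < aj) (hne : ai ≠ aj)
    (hi : ai ∉ Set.Icc (1 - Real.sqrt y) (1 + Real.sqrt y))
    (hj : aj ∉ Set.Icc (1 - Real.sqrt y) (1 + Real.sqrt y)) :
    wAt y (phiSpike y ai) (phiSpike y aj) =
        (y + ai - 1) * (y + aj - 1) / ((ai - 1) * (aj - 1)) ∧
    thetaAt y (phiSpike y ai) (phiSpike y aj) - wAt y (phiSpike y ai) (phiSpike y aj) =
        y * (y + ai - 1) * (y + aj - 1) /
          ((ai - 1) * (aj - 1) * ((ai - 1) * (aj - 1) - y)) := by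
  have hi₁ := sub_one_ne_zero_of_notMem_Icc hi
  have hj₁ := sub_one_ne_zero_of_notMem_Icc hj
  have hij : (ai - 1) * (aj - 1) - y ≠ 0 := fun h => by
    nlinarith [mul_lt_mul'' (lt_sq_sub_one_of_notMem_Icc hi) (lt_sq_sub_one_of_notMem_Icc hj)
      hy0.le hy0.le]
  have hne' : ai - aj ≠ 0 := sub_ne_zero.2 hne
  simp only [wAt, thetaAt, m1MP_phiSpike hy0 hy1.le hi, m1MP_phiSpike hy0 hy1.le hj,
    phiSpike_sub_mul_one_add hi₁, phiSpike_sub_mul_one_add hj₁,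
    phiSpike_sub_phiSpike hi₁ hj₁, phiSpike_sub_phiSpike hj₁ hi₁]
  unfold phiSpike
  constructor <;> field_simp [hai.ne', haj.ne'] <;> ring
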